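/- For any real a > 0 and positive integer n, ∑_{k=1}^{n} ψ₀(k+a)²ψ₁(k+a) = (1/6)[−ψ₂(a+n+1) + ψ₂(a+1) + 6(a+n)ψ₀(a+n+1)²ψ₁(a+n+1) − 6aψ₀(a+1)²ψ₁(a+1) − 6(2a+2n+1)ψ₀(a+n+1)ψ₁(a+n+1) + 6(2a+1)ψ₀(a+1)ψ₁(a+1) + 6(2a+2n+1)ψ₁(a+n+1) − 6(2a+1)ψ₁(a+1) + 2ψ₀(a+n+1)³ − 6ψ₀(a+n+1)² + 12ψ₀(a+n+1) − 2ψ₀(a+1)³ + 6ψ₀(a+1)² − 12ψ₀(a+1)]. -/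

import Mathlib

/-!
Differentiating `log Γ(x + 1) = log x + log Γ(x)` gives
`ψₘ(x + 1) = ψₘ(x) + (-1)ᵐ m! x^(-m-1)`. With these recurrences, `G(x + 1) - G(x) = ψ₀(x)² ψ₁(x)`
becomes a rational identity for the explicit function `G = psi0SqPsi1Antidiff`, so the sum
telescopes to `G(a + n + 1) - G(a + 1)`, which is the right-hand side.
-/

open Finset

/-- The `m`-th polygamma function: the `(m+1)`-th derivative of `log ∘ Γ`. -/
noncomputable def psi (m : ℕ) (x : ℝ) : ℝ :=
  iteratedDeriv (m + 1) (fun y => Real.log (Real.Gamma y)) x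

open Filter Topology

theorem Real.iteratedDeriv_succ_log (k : ℕ) (x : ℝ) :
    iteratedDeriv (k + 1) Real.log x = (-1) ^ k * k.factorial * x ^ (-1 - k : ℤ) := by
  rw [iteratedDeriv_succ', Real.deriv_log', iteratedDeriv_eq_iterate, iter_deriv_inv]

theorem Real.contDiffAt_Gamma {n : WithTop ℕ∞} {x : ℝ} (hx : 0 < x) :
    ContDiffAt ℝ n Real.Gamma x := by
  have hC : ContDiffAt ℂ n Complex.Gamma x := by
    refine (Complex.analyticAt_iff_eventually_differentiableAt.mpr ?_).contDiffAt
    filter_upwards [continuousAt_const.eventually_lt Complex.continuous_re.continuousAt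
      (by simpa using hx)] with z hz
    refine Complex.differentiableAt_Gamma z fun m hm => ?_
    simp only [hm, Complex.neg_re, Complex.natCast_re] at hz
    linarith [m.cast_nonneg (α := ℝ)]
  simpa [Complex.Gamma_ofReal] using hC.real_of_complex

theorem Real.contDiffAt_log_Gamma {n : WithTop ℕ∞} {x : ℝ} (hx : 0 < x) :
    ContDiffAt ℝ n (fun y => Real.log (Real.Gamma y)) x :=
  (Real.contDiffAt_log.mpr (Real.Gamma_pos_of_pos hx).ne').comp x (Real.contDiffAt_Gamma hx)

theorem psi_add_one (m : ℕ) {x : ℝ} (hx : 0 < x) :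
    psi m (x + 1) = psi m x + (-1) ^ m * m.factorial * x ^ (-1 - m : ℤ) := by
  have hlogGamma : (fun y => Real.log (Real.Gamma (y + 1))) =ᶠ[𝓝 x]
      (fun y => Real.log (Real.Gamma y)) + Real.log := by
    filter_upwards [eventually_gt_nhds hx] with y hy
    rw [Pi.add_apply, Real.Gamma_add_one hy.ne', Real.log_mul hy.ne' (Real.Gamma_pos_of_pos hy).ne',
      add_comm]
  rw [psi, ← congrFun (iteratedDeriv_comp_add_const _ _ _), hlogGamma.iteratedDeriv_eq,
    iteratedDeriv_add (Real.contDiffAt_log_Gamma hx) (Real.contDiffAt_log.mpr hx.ne'),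
    Real.iteratedDeriv_succ_log, psi]

theorem psi_zero_add_one {x : ℝ} (hx : 0 < x) : psi 0 (x + 1) = psi 0 x + 1 / x := by
  rw [psi_add_one 0 hx]; norm_num

theorem psi_one_add_one {x : ℝ} (hx : 0 < x) : psi 1 (x + 1) = psi 1 x - 1 / x ^ 2 := by
  rw [psi_add_one 1 hx]; norm_num; ring

theorem psi_two_add_one {x : ℝ} (hx : 0 < x) : psi 2 (x + 1) = psi 2 x + 2 / x ^ 3 := by
  rw [psi_add_one 2 hx]; norm_num; ring

theorem sum_Icc_add_eq_sub_of_forall_sub_eq {M : Type*} [AddCommGroup M] {f G : ℝ → M} {a : ℝ}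
    (hG : ∀ x > a, G (x + 1) - G x = f x) (n : ℕ) :
    ∑ k ∈ Icc 1 n, f (k + a) = G (a + n + 1) - G (a + 1) := by
  have hstep : ∀ k ∈ Icc 1 n, f (k + a) = G ((k + 1 : ℕ) + a) - G (k + a) := by
    intro k hk
    have hk : (1 : ℝ) ≤ k := by exact_mod_cast (mem_Icc.mp hk).1
    rw [Nat.cast_succ, add_right_comm, hG _ (by linarith)]
  rw [sum_congr rfl hstep, ← Ico_add_one_right_eq_Icc,
    sum_Ico_sub (fun k : ℕ => G (k + a)) (by omega)]
  push_cast
  congr 2 <;> ring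

noncomputable def psi0SqPsi1Antidiff (x : ℝ) : ℝ :=
  (1/6) * (-psi 2 x + 6 * (x - 1) * (psi 0 x)^2 * psi 1 x - 6 * (2*x - 1) * psi 0 x * psi 1 x +
    6 * (2*x - 1) * psi 1 x + 2 * (psi 0 x)^3 - 6 * (psi 0 x)^2 + 12 * psi 0 x)

theorem psi0SqPsi1Antidiff_add_one_sub {x : ℝ} (hx : 0 < x) :
    psi0SqPsi1Antidiff (x + 1) - psi0SqPsi1Antidiff x = (psi 0 x)^2 * psi 1 x := by
  rw [psi0SqPsi1Antidiff, psi0SqPsi1Antidiff, psi_zero_add_one hx, psi_one_add_one hx,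
    psi_two_add_one hx]
  field_simp
  ring

theorem stmt_7_general (a : ℝ) (ha : 0 < a) (n : ℕ) :
    ∑ k ∈ Icc 1 n, (psi 0 ((k : ℝ) + a))^2 * psi 1 ((k : ℝ) + a) =
      (1/6) * (-psi 2 (a + n + 1) + psi 2 (a + 1) +
        6 * (a + n) * (psi 0 (a + n + 1))^2 * psi 1 (a + n + 1) - 6 * a * (psi 0 (a + 1))^2 * psi 1 (a + 1) -
        6 * (2*a + 2*n + 1) * psi 0 (a + n + 1) * psi 1 (a + n + 1) + 6 * (2*a + 1) * psi 0 (a + 1) * psi 1 (a + 1) +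
        6 * (2*a + 2*n + 1) * psi 1 (a + n + 1) - 6 * (2*a + 1) * psi 1 (a + 1) +
        2 * (psi 0 (a + n + 1))^3 - 6 * (psi 0 (a + n + 1))^2 + 12 * psi 0 (a + n + 1) -
        2 * (psi 0 (a + 1))^3 + 6 * (psi 0 (a + 1))^2 - 12 * psi 0 (a + 1)) := by
  rw [sum_Icc_add_eq_sub_of_forall_sub_eq
    (fun x hx => psi0SqPsi1Antidiff_add_one_sub (ha.trans hx)) n]
  simp only [psi0SqPsi1Antidiff]
  ring

theorem stmt_7 (a : ℝ) (ha : 0 < a) (n : ℕ) (hn : 0 < n) :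
    ∑ k ∈ Icc 1 n, (psi 0 ((k : ℝ) + a))^2 * psi 1 ((k : ℝ) + a) =
      (1/6) * (-psi 2 (a + n + 1) + psi 2 (a + 1) +
        6 * (a + n) * (psi 0 (a + n + 1))^2 * psi 1 (a + n + 1) - 6 * a * (psi 0 (a + 1))^2 * psi 1 (a + 1) -
        6 * (2*a + 2*n + 1) * psi 0 (a + n + 1) * psi 1 (a + n + 1) + 6 * (2*a + 1) * psi 0 (a + 1) * psi 1 (a + 1) +
        6 * (2*a + 2*n + 1) * psi 1 (a + n + 1) - 6 * (2*a + 1) * psi 1 (a + 1) +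
        2 * (psi 0 (a + n + 1))^3 - 6 * (psi 0 (a + n + 1))^2 + 12 * psi 0 (a + n + 1) -
        2 * (psi 0 (a + 1))^3 + 6 * (psi 0 (a + 1))^2 - 12 * psi 0 (a + 1)) :=
  stmt_7_general a ha n
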